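/- Assume Assumption A holds and μ(ω) > 0 for every ω (write μ_min = min_ω μ(ω)). Let γ ≥ 0 with α := γ/(μ_min·Δ) ≤ 1, and let π be a direct-revelation scheme such that adv_π(s) ≥ −γ for every s ∈ A with π(s) > 0. Then the α-robustification π' of π satisfies adv_{π'}(s) ≥ 0 for every s ∈ A with π'(s) > 0; in particular the obedient strategy is exactly best-responding under π'. -/

import Mathlib

open Finset
open scoped BigOperators Classical

noncomputable section

/-- `p` is a family of probability distributions on the finite set `β`, indexed by `α`. -/
def IsDist {α β : Type*} [Fintype β] (p : α → β → ℝ) : Prop :=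
  (∀ x y, 0 ≤ p x y) ∧ ∀ x, ∑ y, p x y = 1

/-- `p` is a probability distribution on the finite set `β`. -/
def IsProb {β : Type*} [Fintype β] (p : β → ℝ) : Prop :=
  (∀ y, 0 ≤ p y) ∧ ∑ y, p y = 1

/-- The marginal probability `π(s)` of signal `s` under prior `μ` and signaling scheme `π`. -/
def marg {Ω S : Type*} [Fintype Ω] (μ : Ω → ℝ) (π : Ω → S → ℝ) (s : S) : ℝ :=
  ∑ ω, μ ω * π ω s

/-- The posterior probability `π(ω|s)` of state `ω` given signal `s`. -/
def post {Ω S : Type*} [Fintype Ω] (μ : Ω → ℝ) (π : Ω → S → ℝ) (ω : Ω) (s : S) : ℝ :=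
  μ ω * π ω s / marg μ π s

/-- The receiver's expected utility `v(a, μ_s)` of action `a` under the posterior of signal `s`. -/
def vPost {Ω S A : Type*} [Fintype Ω] (μ : Ω → ℝ) (π : Ω → S → ℝ)
    (v : A → Ω → ℝ) (a : A) (s : S) : ℝ :=
  ∑ ω, post μ π ω s * v a ω

/-- Action `a` is `γ`-best-responding to signal `s`. -/
def IsBR {Ω S A : Type*} [Fintype Ω] [Fintype A] (μ : Ω → ℝ) (π : Ω → S → ℝ)
    (v : A → Ω → ℝ) (γ : ℝ) (a : A) (s : S) : Prop :=
  ∀ a' : A, vPost μ π v a' s - γ ≤ vPost μ π v a s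

/-- `ρ` is a `γ`-best-responding receiver strategy: on every signal that is sent with positive
probability, it puts probability `1` on `γ`-best-responding actions (equivalently, probability `0`
on every action that is not `γ`-best-responding). -/
def IsBRStrategy {Ω S A : Type*} [Fintype Ω] [Fintype A] (μ : Ω → ℝ) (π : Ω → S → ℝ)
    (v : A → Ω → ℝ) (γ : ℝ) (ρ : S → A → ℝ) : Prop :=
  ∀ s, 0 < marg μ π s → ∀ a, ¬ IsBR μ π v γ a s → ρ s a = 0

/-- `ρ` is a `(γ, δ)`-best-responding receiver strategy: on every signal that is sent with
positive probability, it puts probability at least `1 - δ` on `γ`-best-responding actions. -/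
def IsApproxBRStrategy {Ω S A : Type*} [Fintype Ω] [Fintype A] (μ : Ω → ℝ) (π : Ω → S → ℝ)
    (v : A → Ω → ℝ) (γ δ : ℝ) (ρ : S → A → ℝ) : Prop :=
  ∀ s, 0 < marg μ π s →
    1 - δ ≤ ∑ a ∈ univ.filter (fun a => IsBR μ π v γ a s), ρ s a

/-- The sender's expected utility `U_μ(π, ρ)`. -/
def senderU {Ω S A : Type*} [Fintype Ω] [Fintype S] [Fintype A] (μ : Ω → ℝ) (π : Ω → S → ℝ)
    (u : A → Ω → ℝ) (ρ : S → A → ℝ) : ℝ :=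
  ∑ ω, ∑ s, μ ω * π ω s * ∑ a, ρ s a * u a ω

/-- The obedient strategy for a direct-revelation scheme: take the recommended action. -/
def obedient {A : Type*} : A → A → ℝ := fun s a => if a = s then 1 else 0

/-- `OPT^BP(μ)`: the supremum of the sender's expected utility over direct-revelation schemes
(signal set `S = A`) and best-responding (`0`-best-responding) receiver strategies. -/
def OPTBP {Ω A : Type*} [Fintype Ω] [Fintype A] (μ : Ω → ℝ) (v u : A → Ω → ℝ) : ℝ :=
  sSup {x | ∃ (π : Ω → A → ℝ) (ρ : A → A → ℝ), IsDist π ∧ IsDist ρ ∧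
    IsBRStrategy μ π v 0 ρ ∧ x = senderU μ π u ρ}

/-- The `α`-robustification of a direct-revelation scheme `π`, where `aOf ω` is the receiver's
unique optimal action at state `ω`. -/
def robustify {Ω A : Type*} (π : Ω → A → ℝ) (aOf : Ω → A) (α : ℝ) : Ω → A → ℝ :=
  fun ω s => (1 - α) * π ω s + if s = aOf ω then α else 0

/-- `μ(Ω_a)`: the prior mass of the set of states whose unique optimal action is `a`. -/
def massOf {Ω A : Type*} [Fintype Ω] (μ : Ω → ℝ) (aOf : Ω → A) (a : A) : ℝ :=
  ∑ ω ∈ univ.filter (fun ω => aOf ω = a), μ ω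

/-- `μ_min = min_ω μ(ω)`. -/
def minPrior {Ω : Type*} [Fintype Ω] [Nonempty Ω] (μ : Ω → ℝ) : ℝ :=
  univ.inf' univ_nonempty μ

/-- The advantage term of recommendation `s` against deviation `a` in a direct-revelation
scheme `π`: the advantage `adv_π(s)` is the minimum of this quantity over `a ≠ s`. -/
def advTerm {Ω A : Type*} [Fintype Ω] (μ : Ω → ℝ) (π : Ω → A → ℝ) (v : A → Ω → ℝ)
    (s a : A) : ℝ :=
  ∑ ω, post μ π ω s * (v s ω - v a ω)


/-!
Mixing `π` with the fully revealing scheme with weight `α` scales the unnormalised advantage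
`∑ ω, μ ω π(s|ω) (v(s,ω) - v(a,ω))` of `π` by `1 - α` and adds `α` times the advantage of the
states in `Ω_s`. The first part is at least `-γ`, since the marginal of `s` is at most `1`; the
second is at least `μ_min Δ`, since `Ω_s` is nonempty and every state in it prefers `s` by `Δ`.
With `α μ_min Δ = γ` the total is at least `-(1 - α) γ + γ = α γ ≥ 0`.
-/

lemma robustify_nonneg {Ω A : Type*} {π : Ω → A → ℝ} (hπ : ∀ ω s, 0 ≤ π ω s) (aOf : Ω → A) {α : ℝ}
    (hα0 : 0 ≤ α) (hα1 : α ≤ 1) (ω : Ω) (s : A) : 0 ≤ robustify π aOf α ω s := by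
  rw [robustify]
  split_ifs <;> nlinarith [hπ ω s]

section Robustification

variable {Ω A : Type*} [Fintype Ω]

lemma advTerm_eq_sum_div (μ : Ω → ℝ) (π : Ω → A → ℝ) (v : A → Ω → ℝ) (s a : A) :
    advTerm μ π v s a = (∑ ω, μ ω * π ω s * (v s ω - v a ω)) / marg μ π s := by
  rw [advTerm, sum_div]
  exact sum_congr rfl fun ω _ => by rw [post]; ring

lemma advTerm_eq_vPost_sub (μ : Ω → ℝ) (π : Ω → A → ℝ) (v : A → Ω → ℝ) (s a : A) :
    advTerm μ π v s a = vPost μ π v s s - vPost μ π v a s := by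
  rw [advTerm, vPost, vPost, ← sum_sub_distrib]
  exact sum_congr rfl fun ω _ => by ring

lemma isBRStrategy_obedient [Fintype A] {μ : Ω → ℝ} {π : Ω → A → ℝ} {v : A → Ω → ℝ}
    (h : ∀ s, 0 < marg μ π s → ∀ a, a ≠ s → 0 ≤ advTerm μ π v s a) :
    IsBRStrategy μ π v 0 obedient := by
  intro s hs a hnot
  rw [obedient, if_neg]
  rintro rfl
  refine hnot fun a' => ?_
  rcases eq_or_ne a' a with rfl | ha'
  · simp
  · have := h a hs a' ha'
    rw [advTerm_eq_vPost_sub] at this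
    linarith

lemma marg_nonneg {μ : Ω → ℝ} {π : Ω → A → ℝ} {s : A} (hμ : ∀ ω, 0 ≤ μ ω) (hπ : ∀ ω, 0 ≤ π ω s) :
    0 ≤ marg μ π s :=
  sum_nonneg fun ω _ => mul_nonneg (hμ ω) (hπ ω)

lemma marg_le_one [Fintype A] {μ : Ω → ℝ} {π : Ω → A → ℝ} (hμ : IsProb μ) (hπ : IsDist π)
    (s : A) : marg μ π s ≤ 1 := by
  rw [← hμ.2, marg]
  refine sum_le_sum fun ω _ => mul_le_of_le_one_right (hμ.1 ω) ?_
  rw [← hπ.2 ω]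
  exact single_le_sum (fun y _ => hπ.1 ω y) (mem_univ s)

/-- Unlike `adv_π(s) ≥ -γ` itself, this unnormalised form also holds when `s` is never sent. -/
lemma neg_le_sum_gain_of_le_advTerm [Fintype A] {μ : Ω → ℝ} {π : Ω → A → ℝ} {v : A → Ω → ℝ}
    {γ : ℝ} {s a : A} (hμ : IsProb μ) (hπ : IsDist π) (hγ : 0 ≤ γ)
    (hadv : 0 < marg μ π s → -γ ≤ advTerm μ π v s a) :
    -γ ≤ ∑ ω, μ ω * π ω s * (v s ω - v a ω) := by
  rcases (marg_nonneg hμ.1 fun ω => hπ.1 ω s).lt_or_eq with hs | hs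
  · have hsum : ∑ ω, μ ω * π ω s * (v s ω - v a ω) = advTerm μ π v s a * marg μ π s := by
      rw [advTerm_eq_sum_div, div_mul_cancel₀ _ hs.ne']
    rw [hsum]
    nlinarith [hadv hs, marg_le_one hμ hπ s]
  · have hzero : ∀ ω, μ ω * π ω s = 0 :=
      fun ω => (sum_eq_zero_iff_of_nonneg fun ω _ => mul_nonneg (hμ.1 ω) (hπ.1 ω s)).mp
        hs.symm ω (mem_univ ω)
    simp [hzero, hγ]

lemma sum_mul_robustify (μ : Ω → ℝ) (π : Ω → A → ℝ) (aOf : Ω → A) (α : ℝ) (s : A)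
    (f : Ω → ℝ) :
    ∑ ω, μ ω * robustify π aOf α ω s * f ω =
      (1 - α) * ∑ ω, μ ω * π ω s * f ω +
        α * ∑ ω ∈ univ.filter (fun ω => aOf ω = s), μ ω * f ω := by
  rw [mul_sum, mul_sum, sum_filter, ← sum_add_distrib]
  refine sum_congr rfl fun ω _ => ?_
  rw [robustify, eq_comm (a := s)]
  split_ifs <;> ring

lemma minPrior_le [Nonempty Ω] (μ : Ω → ℝ) (ω : Ω) : minPrior μ ≤ μ ω :=
  inf'_le μ (mem_univ ω)

lemma minPrior_pos [Nonempty Ω] {μ : Ω → ℝ} (hμ : ∀ ω, 0 < μ ω) : 0 < minPrior μ :=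
  (lt_inf'_iff _).mpr fun ω _ => hμ ω

lemma minPrior_mul_le_sum_gain [Nonempty Ω] {μ : Ω → ℝ} {v : A → Ω → ℝ} {aOf : Ω → A} {Δ : ℝ}
    (hμ : ∀ ω, 0 ≤ μ ω) (hΔ0 : 0 ≤ Δ) (hΔ : ∀ ω a, a ≠ aOf ω → Δ ≤ v (aOf ω) ω - v a ω)
    {s a : A} (hs : ∃ ω, aOf ω = s) (has : a ≠ s) :
    minPrior μ * Δ ≤ ∑ ω ∈ univ.filter (fun ω => aOf ω = s), μ ω * (v s ω - v a ω) := by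
  have hgain : ∀ ω, aOf ω = s → Δ ≤ v s ω - v a ω := by
    rintro ω rfl
    exact hΔ ω a has
  obtain ⟨ω₀, hω₀⟩ := hs
  calc minPrior μ * Δ ≤ μ ω₀ * (v s ω₀ - v a ω₀) :=
        mul_le_mul (minPrior_le μ ω₀) (hgain ω₀ hω₀) hΔ0 (hμ ω₀)
    _ ≤ _ := by
      refine single_le_sum (f := fun ω => μ ω * (v s ω - v a ω)) (fun ω hω => ?_)
        (mem_filter.mpr ⟨mem_univ ω₀, hω₀⟩)
      exact mul_nonneg (hμ ω) (hΔ0.trans (hgain ω (mem_filter.mp hω).2))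

theorem advTerm_robustify_nonneg [Fintype A] [Nonempty Ω] {μ : Ω → ℝ} {π : Ω → A → ℝ}
    {v : A → Ω → ℝ} {aOf : Ω → A} {Δ γ α : ℝ} (hμ : IsProb μ) (hΔ0 : 0 ≤ Δ) (hΔ : ∀ ω a, a ≠ aOf ω → Δ ≤ v (aOf ω) ω - v a ω) (hπ : IsDist π)
    (hγ : 0 ≤ γ) (hα0 : 0 ≤ α) (hα1 : α ≤ 1) (hαγ : γ ≤ α * (minPrior μ * Δ))
    {s a : A} (hs : ∃ ω, aOf ω = s) (has : a ≠ s)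
    (hadv : 0 < marg μ π s → -γ ≤ advTerm μ π v s a) :
    0 ≤ advTerm μ (robustify π aOf α) v s a := by
  rw [advTerm_eq_sum_div, sum_mul_robustify]
  refine div_nonneg ?_ (marg_nonneg hμ.1 fun ω => robustify_nonneg hπ.1 aOf hα0 hα1 ω s)
  have hπpart := neg_le_sum_gain_of_le_advTerm hμ hπ hγ hadv
  have hΩs := minPrior_mul_le_sum_gain hμ.1 hΔ0 hΔ hs has
  linarith [mul_le_mul_of_nonneg_left hπpart (sub_nonneg.mpr hα1),
    mul_le_mul_of_nonneg_left hΩs hα0, mul_nonneg hα0 hγ]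

end Robustification

theorem robustified_obedient_exact_general
    {Ω A : Type*} [Fintype Ω] [Fintype A] [Nonempty Ω]
    (μ : Ω → ℝ) (hμ : IsProb μ) (hμpos : ∀ ω, 0 < μ ω)
    (v : A → Ω → ℝ)
    -- Assumption A
    (aOf : Ω → A)
    (Δ : ℝ) (hΔpos : 0 < Δ) (hΔ : ∀ ω a, a ≠ aOf ω → Δ ≤ v (aOf ω) ω - v a ω)
    (hOnto : ∀ a, ∃ ω, aOf ω = a)
    (γ : ℝ) (hγ : 0 ≤ γ) (hα1 : γ / (minPrior μ * Δ) ≤ 1)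
    (π : Ω → A → ℝ) (hπ : IsDist π)
    (hadv : ∀ s, 0 < marg μ π s → ∀ a, a ≠ s → -γ ≤ advTerm μ π v s a) :
    (∀ s, 0 < marg μ (robustify π aOf (γ / (minPrior μ * Δ))) s →
      ∀ a, a ≠ s → 0 ≤ advTerm μ (robustify π aOf (γ / (minPrior μ * Δ))) v s a) ∧
    IsBRStrategy μ (robustify π aOf (γ / (minPrior μ * Δ))) v 0 obedient := by
  have hscale : 0 < minPrior μ * Δ := mul_pos (minPrior_pos hμpos) hΔpos
  have hobedient : ∀ s, 0 < marg μ (robustify π aOf (γ / (minPrior μ * Δ))) s →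
      ∀ a, a ≠ s → 0 ≤ advTerm μ (robustify π aOf (γ / (minPrior μ * Δ))) v s a :=
    fun s _ a has => advTerm_robustify_nonneg hμ hΔpos.le hΔ hπ hγ
      (div_nonneg hγ hscale.le) hα1 (div_mul_cancel₀ γ hscale.ne').ge (hOnto s) has
      fun hs => hadv s hs a has
  exact ⟨hobedient, isBRStrategy_obedient hobedient⟩

/-- under Assumption A with a fully supported prior, if the direct-revelation
scheme `π` has `adv_π(s) ≥ -γ` on all sent signals and `α := γ/(μ_min·Δ) ≤ 1`, then the
`α`-robustification `π'` of `π` has `adv_{π'}(s) ≥ 0` on all sent signals; in particular, the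
obedient strategy is exactly (`0`-)best-responding under `π'`. -/
theorem robustified_obedient_exact
    {Ω A : Type*} [Fintype Ω] [Fintype A] [Nonempty Ω] [Nonempty A]
    (μ : Ω → ℝ) (hμ : IsProb μ) (hμpos : ∀ ω, 0 < μ ω)
    (v : A → Ω → ℝ) (hv : ∀ a ω, 0 ≤ v a ω ∧ v a ω ≤ 1)
    -- Assumption A
    (aOf : Ω → A) (hBest : ∀ ω a, a ≠ aOf ω → v a ω < v (aOf ω) ω)
    (Δ : ℝ) (hΔpos : 0 < Δ) (hΔ : ∀ ω a, a ≠ aOf ω → Δ ≤ v (aOf ω) ω - v a ω)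
    (hOnto : ∀ a, ∃ ω, aOf ω = a)
    (γ : ℝ) (hγ : 0 ≤ γ) (hα1 : γ / (minPrior μ * Δ) ≤ 1)
    (π : Ω → A → ℝ) (hπ : IsDist π)
    (hadv : ∀ s, 0 < marg μ π s → ∀ a, a ≠ s → -γ ≤ advTerm μ π v s a) :
    (∀ s, 0 < marg μ (robustify π aOf (γ / (minPrior μ * Δ))) s →
      ∀ a, a ≠ s → 0 ≤ advTerm μ (robustify π aOf (γ / (minPrior μ * Δ))) v s a) ∧
    IsBRStrategy μ (robustify π aOf (γ / (minPrior μ * Δ))) v 0 obedient :=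
  robustified_obedient_exact_general μ hμ hμpos v aOf Δ hΔpos hΔ hOnto γ hγ hα1 π hπ hadv
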